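/- arXiv:2507.12178 — 4 statements merged into one kernel-verified Lean document; each statement's English description precedes it below -/
import Mathlib

section
/- Let I be a stable monomial ideal of k[x_1,...,x_n] and let N be the maximal degree of a minimal monomial generator of I. Then every minimal monomial generator of the integral closure Ī has degree at most N. -/
open MvPolynomial

variable {k : Type} [Field k] {n : ℕ}

/-- An ideal of `k[x₁,…,xₙ]` is a *monomial ideal* if it is generated by monomials. -/
def IsMonomialIdeal (I : Ideal (MvPolynomial (Fin n) k)) : Prop :=
  ∃ G : Set (Fin n →₀ ℕ), I = Ideal.span ((fun A => (monomial A (1 : k))) '' G)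

/-- The integral closure of an ideal `I`, as a set: all elements `f` satisfying an
equation `f^r + a₁ f^{r-1} + ⋯ + a_r = 0` with `aᵢ ∈ Iⁱ`. -/
def intCl (I : Ideal (MvPolynomial (Fin n) k)) : Set (MvPolynomial (Fin n) k) :=
  {f | ∃ r : ℕ, 0 < r ∧ ∃ a : ℕ → MvPolynomial (Fin n) k,
    (∀ i, 1 ≤ i → i ≤ r → a i ∈ I ^ i) ∧
    f ^ r + ∑ i ∈ Finset.Icc 1 r, a i * f ^ (r - i) = 0}

/-- The exponent vectors of the minimal monomial generators of a set `T` of polynomials: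
those `A` with `x^A ∈ T` minimal in the componentwise (divisibility) order. -/
def minExps (T : Set (MvPolynomial (Fin n) k)) : Set (Fin n →₀ ℕ) :=
  {A | monomial A (1 : k) ∈ T ∧
    ∀ B : Fin n →₀ ℕ, monomial B (1 : k) ∈ T → B ≤ A → B = A}

/-- A set `T` of polynomials is *stable* if for every monomial `x^A ∈ T`, letting `t` be the
largest index of a variable dividing `x^A`, we have `x_i · x^A / x_t ∈ T` for all `i < t`. -/
def IsStableSet (T : Set (MvPolynomial (Fin n) k)) : Prop :=
  ∀ A : Fin n →₀ ℕ, monomial A (1 : k) ∈ T →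
    ∀ t : Fin n, A t ≠ 0 → (∀ s, A s ≠ 0 → s ≤ t) →
      ∀ i, i < t →
        monomial (A + Finsupp.single i 1 - Finsupp.single t 1) (1 : k) ∈ T

/-!
Suppose `x^B` is a minimal generator of `Ī` of degree `> N`, and let `x_t` be the last variable
dividing it. Integrality of the monomial `x^B` gives `x^(jB) ∈ I^j` for some `j ≥ 1`, so `x^(jB)` is
divisible by a product `x^D` of `j` minimal generators of `I`, of degree `≤ jN ≤ j·deg B - j`.
Powers of stable monomial ideals are stable, and stability lets us move exponent mass of `x^D`
from `x_t` to earlier variables in which `x^(jB)` has room, until `x^D` divides `x^(j(B - e_t))`.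
Hence `x^(B - e_t) ∈ Ī`, contradicting minimality.
-/

open Finsupp (single)
open scoped Pointwise

theorem monomial_one_mem_of_le {σ R : Type*} [CommSemiring R] {I : Ideal (MvPolynomial σ R)}
    {a b : σ →₀ ℕ} (ha : monomial a (1 : R) ∈ I) (hab : a ≤ b) : monomial b (1 : R) ∈ I :=
  I.mem_of_dvd (monomial_dvd_monomial.mpr ⟨Or.inr hab, dvd_rfl⟩) ha

theorem image_monomial_one_add {σ R : Type*} [CommSemiring R] (G H : Set (σ →₀ ℕ)) :
    (fun A => monomial A (1 : R)) '' (G + H) =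
      (fun A => monomial A (1 : R)) '' G * (fun A => monomial A (1 : R)) '' H := by
  ext f
  simp only [Set.mem_image, Set.mem_add, Set.mem_mul]
  constructor
  · rintro ⟨_, ⟨a, ha, b, hb, rfl⟩, rfl⟩
    exact ⟨_, ⟨a, ha, rfl⟩, _, ⟨b, hb, rfl⟩, by rw [monomial_mul, one_mul]⟩
  · rintro ⟨_, ⟨a, ha, rfl⟩, _, ⟨b, hb, rfl⟩, rfl⟩
    exact ⟨a + b, ⟨a, ha, b, hb, rfl⟩, by rw [monomial_mul, one_mul]⟩

theorem mem_intCl_of_pow_mem_pow {I : Ideal (MvPolynomial (Fin n) k)} {f : MvPolynomial (Fin n) k}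
    {j : ℕ} (hj : 0 < j) (hf : f ^ j ∈ I ^ j) : f ∈ intCl I := by
  refine ⟨j, hj, fun i => if i = j then -f ^ j else 0, fun i _ _ => ?_, ?_⟩
  · dsimp only
    split_ifs with hij
    · subst hij
      exact neg_mem hf
    · exact zero_mem _
  · rw [Finset.sum_eq_single_of_mem j (Finset.mem_Icc.mpr ⟨hj, le_rfl⟩)
      (fun i _ hij => by simp [hij])]
    simp

theorem exists_last_ne_zero {σ M : Type*} [LinearOrder σ] [Zero M] {B : σ →₀ M} (hB : B ≠ 0) :
    ∃ t, B t ≠ 0 ∧ ∀ s, B s ≠ 0 → s ≤ t := by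
  have hne := Finsupp.support_nonempty_iff.mpr hB
  exact ⟨_, Finsupp.mem_support_iff.mp (B.support.max'_mem hne),
    fun s hs => B.support.le_max' s (Finsupp.mem_support_iff.mpr hs)⟩

theorem exists_minExps_le {T : Set (MvPolynomial (Fin n) k)} (A : Fin n →₀ ℕ)
    (hA : monomial A (1 : k) ∈ T) : ∃ A' ∈ minExps T, A' ≤ A := by
  obtain ⟨A', ⟨hA'T, hA'A⟩, hmin⟩ :=
    wellFounded_lt.has_min {B | monomial B (1 : k) ∈ T ∧ B ≤ A} ⟨A, hA, le_rfl⟩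
  refine ⟨A', ⟨hA'T, fun B hB hBA' => ?_⟩, hA'A⟩
  by_contra hne
  exact hmin B ⟨hB, hBA'.trans hA'A⟩ (lt_of_le_of_ne hBA' hne)

namespace IsMonomialIdeal

variable {I J : Ideal (MvPolynomial (Fin n) k)}

theorem monomial_mem_of_mem_support (hI : IsMonomialIdeal I) {f : MvPolynomial (Fin n) k}
    (hf : f ∈ I) {A : Fin n →₀ ℕ} (hA : A ∈ f.support) : monomial A (1 : k) ∈ I := by
  obtain ⟨G, rfl⟩ := hI
  obtain ⟨a, ha, haA⟩ := mem_ideal_span_monomial_image.mp hf A hA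
  exact monomial_one_mem_of_le (Ideal.subset_span ⟨a, ha, rfl⟩) haA

theorem mul (hI : IsMonomialIdeal I) (hJ : IsMonomialIdeal J) : IsMonomialIdeal (I * J) := by
  obtain ⟨G, rfl⟩ := hI
  obtain ⟨H, rfl⟩ := hJ
  exact ⟨G + H, by rw [Ideal.span_mul_span', image_monomial_one_add]⟩

theorem pow (hI : IsMonomialIdeal I) : ∀ j : ℕ, IsMonomialIdeal (I ^ j)
  | 0 => ⟨{0}, by simp⟩
  | j + 1 => pow_succ I j ▸ (hI.pow j).mul hI

theorem exists_add_le_of_monomial_mem_mul (hI : IsMonomialIdeal I) (hJ : IsMonomialIdeal J)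
    {C : Fin n →₀ ℕ} (hC : monomial C (1 : k) ∈ I * J) :
    ∃ a b, monomial a (1 : k) ∈ I ∧ monomial b (1 : k) ∈ J ∧ a + b ≤ C := by
  obtain ⟨G, rfl⟩ := hI
  obtain ⟨H, rfl⟩ := hJ
  rw [Ideal.span_mul_span', ← image_monomial_one_add] at hC
  obtain ⟨_, ⟨a, ha, b, hb, rfl⟩, hle⟩ := mem_ideal_span_monomial_image.mp hC C (by simp)
  exact ⟨a, b, Ideal.subset_span ⟨a, ha, rfl⟩, Ideal.subset_span ⟨b, hb, rfl⟩, hle⟩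

theorem exists_le_degree_le_of_monomial_mem_pow (hI : IsMonomialIdeal I) {N : ℕ}
    (hN : ∀ A ∈ minExps (I : Set (MvPolynomial (Fin n) k)), A.degree ≤ N) :
    ∀ {j : ℕ} {C : Fin n →₀ ℕ}, monomial C (1 : k) ∈ I ^ j →
      ∃ D ≤ C, monomial D (1 : k) ∈ I ^ j ∧ D.degree ≤ j * N
  | 0, _, _ => ⟨0, bot_le, by simp, by simp⟩
  | j + 1, C, hC => by
    rw [pow_succ] at hC
    obtain ⟨a, b, ha, hb, habC⟩ := (hI.pow j).exists_add_le_of_monomial_mem_mul hI hC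
    obtain ⟨D, hDa, hD, hDdeg⟩ := exists_le_degree_le_of_monomial_mem_pow hI hN ha
    obtain ⟨c, hc, hcb⟩ := exists_minExps_le b hb
    refine ⟨D + c, (add_le_add hDa hcb).trans habC, ?_, ?_⟩
    · rw [pow_succ, ← one_mul (1 : k), ← monomial_mul]
      exact Ideal.mul_mem_mul hD hc.1
    · rw [map_add, add_mul, one_mul]
      exact add_le_add hDdeg (hN c hc)

/-- The coefficient of `x^(rB)` in an integral equation of `x^B` of degree `r` is nonzero in some
term `a_j x^((r-j)B)`, which puts `jB` in the support of `a_j ∈ I^j`. -/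
theorem exists_monomial_nsmul_mem_pow (hI : IsMonomialIdeal I) {B : Fin n →₀ ℕ}
    (hB : monomial B (1 : k) ∈ intCl I) : ∃ j, 0 < j ∧ monomial (j • B) (1 : k) ∈ I ^ j := by
  obtain ⟨r, -, a, ha, heq⟩ := hB
  have hcoeff : coeff (r • B) (∑ i ∈ Finset.Icc 1 r, a i * monomial B (1 : k) ^ (r - i)) ≠ 0 := by
    rw [eq_neg_of_add_eq_zero_right heq, coeff_neg, monomial_pow, one_pow, coeff_monomial,
      if_pos rfl]
    exact neg_ne_zero.mpr one_ne_zero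
  rw [coeff_sum] at hcoeff
  obtain ⟨j, hj, hne⟩ := Finset.exists_ne_zero_of_sum_ne_zero hcoeff
  rw [Finset.mem_Icc] at hj
  have hrB : r • B = j • B + (r - j) • B := by rw [← add_smul, Nat.add_sub_cancel' hj.2]
  rw [monomial_pow, one_pow, hrB, coeff_mul_monomial, mul_one] at hne
  exact ⟨j, hj.1, (hI.pow j).monomial_mem_of_mem_support (ha j hj.1 hj.2) (mem_support_iff.mpr hne)⟩

end IsMonomialIdeal

theorem add_nsmul_single_le_iff {σ : Type*} {C D : σ →₀ ℕ} {t : σ} {m : ℕ} :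
    D + m • single t 1 ≤ C ↔ D ≤ C ∧ D t + m ≤ C t := by
  refine ⟨fun h => ⟨le_self_add.trans h, by simpa using h t⟩, fun ⟨hDC, hDt⟩ s => ?_⟩
  rcases eq_or_ne s t with rfl | hs
  · simpa using hDt
  · simpa [Finsupp.single_eq_of_ne hs] using hDC s

namespace IsStableSet

variable {T : Set (MvPolynomial (Fin n) k)}

theorem add_single_mem (hT : IsStableSet T) {E : Fin n →₀ ℕ} {t l : Fin n}
    (hE : monomial (E + single t 1) (1 : k) ∈ T)
    (ht : ∀ s, (E + single t 1 : Fin n →₀ ℕ) s ≠ 0 → s ≤ t)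
    (hl : l < t) : monomial (E + single l 1) (1 : k) ∈ T := by
  have := hT _ hE t (by simp) ht l hl
  rwa [add_right_comm, add_tsub_cancel_right] at this

theorem exists_shift_from_last (hT : IsStableSet T) {C D : Fin n →₀ ℕ} {t : Fin n}
    (htC : ∀ s, C s ≠ 0 → s ≤ t) (hD : monomial D (1 : k) ∈ T) (hDC : D ≤ C) (hDt : D t ≠ 0)
    (hdeg : D.degree + (C t - D t) < C.degree) :
    ∃ D', monomial D' (1 : k) ∈ T ∧ D' ≤ C ∧ D'.degree = D.degree ∧ D' t + 1 = D t := by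
  obtain ⟨l, hlt, hlC⟩ : ∃ l, l ≠ t ∧ D l < C l := by
    -- otherwise `D` and `C` differ only at `t`, so their degrees differ by exactly `C t - D t`
    by_contra! h
    have hCD : C ≤ D + (C t - D t) • single t 1 := fun s => by
      simp only [Finsupp.add_apply, Finsupp.smul_apply, smul_eq_mul]
      rcases eq_or_ne s t with rfl | hs
      · simp only [Finsupp.single_eq_same]
        omega
      · simpa [Finsupp.single_eq_of_ne hs] using h s hs
    have := Finsupp.degree_mono hCD
    simp only [map_add, map_nsmul, Finsupp.degree_single, smul_eq_mul, mul_one] at this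
    omega
  obtain ⟨E, rfl⟩ : ∃ E, D = E + single t 1 := by
    obtain ⟨E, hE⟩ := exists_add_of_le (Finsupp.single_le_iff.mpr (Nat.one_le_iff_ne_zero.mpr hDt))
    exact ⟨E, hE.trans (add_comm _ _)⟩
  have hl : l < t := lt_of_le_of_ne (htC l (by omega)) hlt
  refine ⟨E + single l 1, hT.add_single_mem hD (fun s hs => htC s (by have := hDC s; omega)) hl,
    fun s => ?_, by simp, by simp [Finsupp.single_eq_of_ne hlt.symm]⟩
  have hs := hDC s
  simp only [Finsupp.add_apply, Finsupp.single_apply] at hs hlC ⊢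
  split_ifs at hs hlC ⊢ <;> subst_vars <;> omega

theorem exists_add_nsmul_single_le (hT : IsStableSet T) {C D : Fin n →₀ ℕ} {t : Fin n}
    (htC : ∀ s, C s ≠ 0 → s ≤ t) (hD : monomial D (1 : k) ∈ T) (hDC : D ≤ C) :
    ∀ {m : ℕ}, m ≤ C t → D.degree + m ≤ C.degree →
      ∃ D', monomial D' (1 : k) ∈ T ∧ D'.degree = D.degree ∧ D' + m • single t 1 ≤ C
  | 0, _, _ => ⟨D, hD, rfl, by simpa using hDC⟩
  | m + 1, hm, hdeg => by
    obtain ⟨D', hD', hD'deg, hD'C⟩ :=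
      exists_add_nsmul_single_le hT htC hD hDC (m := m) (by omega) (by omega)
    simp only [add_nsmul_single_le_iff] at hD'C ⊢
    by_cases hroom : D' t + (m + 1) ≤ C t
    · exact ⟨D', hD', hD'deg, hD'C.1, hroom⟩
    obtain ⟨D'', hD'', hD''C, hD''deg, hD''t⟩ :=
      hT.exists_shift_from_last htC hD' hD'C.1 (by omega) (by omega)
    exact ⟨D'', hD'', hD''deg.trans hD'deg, hD''C, by omega⟩

variable {I J : Ideal (MvPolynomial (Fin n) k)}

theorem mul (hI : IsMonomialIdeal I) (hJ : IsMonomialIdeal J)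
    (hsI : IsStableSet (I : Set (MvPolynomial (Fin n) k)))
    (hsJ : IsStableSet (J : Set (MvPolynomial (Fin n) k))) :
    IsStableSet ((I * J : Ideal (MvPolynomial (Fin n) k)) : Set (MvPolynomial (Fin n) k)) := by
  intro A hA t hAt htA i hit
  obtain ⟨a, b, ha, hb, habA⟩ := hI.exists_add_le_of_monomial_mem_mul hJ hA
  -- shift whichever factor involves `x_t`; if neither does, `x^(a+b)` already divides the target
  suffices h : ∃ a' b', monomial a' (1 : k) ∈ I ∧ monomial b' (1 : k) ∈ J ∧
      a' + b' ≤ A + single i 1 - single t 1 by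
    obtain ⟨a', b', ha', hb', hle⟩ := h
    refine monomial_one_mem_of_le ?_ hle
    rw [← one_mul (1 : k), ← monomial_mul]
    exact Ideal.mul_mem_mul ha' hb'
  have hta : ∀ s, a s ≠ 0 → s ≤ t := fun s hs => htA s (by have := habA s; simp at this; omega)
  have htb : ∀ s, b s ≠ 0 → s ≤ t := fun s hs => htA s (by have := habA s; simp at this; omega)
  refine if hat : a t = 0 then if hbt : b t = 0 then ⟨a, b, ha, hb, ?_⟩
    else ⟨a, b + single i 1 - single t 1, ha, hsJ b hb t hbt htb i hit, ?_⟩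
    else ⟨a + single i 1 - single t 1, b, hsI a ha t hat hta i hit, hb, ?_⟩
  all_goals
    intro s
    have := habA s
    simp only [Finsupp.add_apply, Finsupp.tsub_apply, Finsupp.single_apply] at this ⊢
    split_ifs <;> subst_vars <;> omega

theorem pow (hI : IsMonomialIdeal I) (hs : IsStableSet (I : Set (MvPolynomial (Fin n) k))) :
    ∀ j : ℕ, IsStableSet ((I ^ j : Ideal (MvPolynomial (Fin n) k)) : Set (MvPolynomial (Fin n) k))
  | 0 => fun _ _ _ _ _ _ _ => by simp
  | j + 1 => pow_succ I j ▸ mul (hI.pow j) hI (pow hI hs j) hs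

end IsStableSet

theorem IsMonomialIdeal.monomial_nsmul_tsub_single_mem_pow {I : Ideal (MvPolynomial (Fin n) k)}
    (hI : IsMonomialIdeal I) (hst : IsStableSet (I : Set (MvPolynomial (Fin n) k))) {N : ℕ}
    (hN : ∀ A ∈ minExps (I : Set (MvPolynomial (Fin n) k)), A.degree ≤ N) {B : Fin n →₀ ℕ}
    {t : Fin n} (hBt : B t ≠ 0) (htB : ∀ s, B s ≠ 0 → s ≤ t) (hBN : N < B.degree) {j : ℕ}
    (hjB : monomial (j • B) (1 : k) ∈ I ^ j) : monomial (j • (B - single t 1)) (1 : k) ∈ I ^ j := by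
  obtain ⟨D, hDB, hD, hDdeg⟩ := hI.exists_le_degree_le_of_monomial_mem_pow hN hjB
  obtain ⟨D', hD', -, hD'B⟩ := (hst.pow hI j).exists_add_nsmul_single_le (t := t)
    (fun s hs => htB s (by simp_all)) hD hDB (by simpa using Nat.le_mul_of_pos_right j (by omega))
    (by rw [map_nsmul, smul_eq_mul]; nlinarith)
  have hjB' : j • B = j • (B - single t 1) + j • single t 1 := by
    rw [← smul_add,
      tsub_add_cancel_of_le (Finsupp.single_le_iff.mpr (Nat.one_le_iff_ne_zero.mpr hBt))]
  exact monomial_one_mem_of_le hD' (le_of_add_le_add_right (hjB' ▸ hD'B))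

/-- If `I` is a stable monomial ideal all of whose minimal monomial
generators have degree at most `N` (e.g. `N` is the maximal degree of a minimal generator),
then every minimal monomial generator of the integral closure `Ī` has degree at most `N`. -/
theorem intCl_minExps_degree_le (I : Ideal (MvPolynomial (Fin n) k))
    (hI : IsMonomialIdeal I) (hst : IsStableSet (I : Set (MvPolynomial (Fin n) k)))
    (N : ℕ) (hN : ∀ A ∈ minExps (I : Set (MvPolynomial (Fin n) k)), ∑ j, A j ≤ N) :
    ∀ B ∈ minExps (intCl I), ∑ j, B j ≤ N := by
  simp only [← Finsupp.degree_eq_sum] at hN ⊢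
  intro B ⟨hBI, hBmin⟩
  by_contra! hBN
  obtain ⟨t, hBt, htB⟩ := exists_last_ne_zero (B := B) (by rintro rfl; simp at hBN)
  obtain ⟨j, hj, hjB⟩ := hI.exists_monomial_nsmul_mem_pow hBI
  have hmem : monomial (B - single t 1) (1 : k) ∈ intCl I := by
    refine mem_intCl_of_pow_mem_pow hj ?_
    rw [monomial_pow, one_pow]
    exact hI.monomial_nsmul_tsub_single_mem_pow hst hN hBt htB hBN hjB
  have hBt' := DFunLike.congr_fun (hBmin _ hmem tsub_le_self) t
  simp only [Finsupp.tsub_apply, Finsupp.single_eq_same] at hBt'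
  omega
end

section
/- Let m be an odd positive integer, s = (m+1)/2, and let x^{B_1},...,x^{B_m} be pairwise coprime monomials in k[x_1,...,x_n]. Define C_i as the exponent vector of the product ∏_{k=1}^{s-1} x^{B_{ν(i+k)}}, where ν(j) ∈ {1,...,m} with j ≡ ν(j) mod m, and let I = ⟨x^{C_1},...,x^{C_m}⟩. Then each x^{C_i} is a minimal monomial generator of the integral closure Ī; in particular μ(I) ≤ μ(Ī). -/
/-! Write `I = (x^{C_1}, …, x^{C_m})`. A monomial `x^A` integral over `I` satisfies an equation
in which `x^{rA}` must cancel against a monomial of some `Iⁱ x^{(r-i)A}`, so `iA` dominates a sum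
`C_{j_1} + ⋯ + C_{j_i}`. If moreover `A ≤ C_{i₀}`, every `C_j` in that sum has support inside that
of `C_{i₀}`. By coprimality the support of `C_j` records the cyclic arc `j+1, …, j+s-1` of indices,
and an arc of length `s - 1 < m` contained in another one is that one, so all `j` equal `i₀`,
whence `C_{i₀} ≤ A`. -/

open MvPolynomial

variable {k : Type} [Field k] {n : ℕ}

section MonomialIdeal

variable {σ R ι : Type*} [CommSemiring R]

theorem exists_le_of_mem_span_monomial {C : ι → σ →₀ ℕ} {f : MvPolynomial σ R}
    (hf : f ∈ Ideal.span (Set.range fun j => monomial (C j) (1 : R)))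
    {D : σ →₀ ℕ} (hD : D ∈ f.support) : ∃ j, C j ≤ D := by
  rw [Set.range_comp' (fun s => monomial s (1 : R)) C, mem_ideal_span_monomial_image] at hf
  obtain ⟨_, ⟨j, rfl⟩, hj⟩ := hf D hD
  exact ⟨j, hj⟩

theorem exists_multiset_sum_le_of_mem_span_monomial_pow {C : ι → σ →₀ ℕ} (i : ℕ)
    {f : MvPolynomial σ R} (hf : f ∈ Ideal.span (Set.range fun j => monomial (C j) (1 : R)) ^ i)
    {D : σ →₀ ℕ} (hD : D ∈ f.support) :
    ∃ T : Multiset ι, Multiset.card T = i ∧ (T.map C).sum ≤ D := by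
  classical
  induction i generalizing f D with
  | zero => exact ⟨0, rfl, by simp⟩
  | succ i ih =>
    rw [pow_succ] at hf
    induction hf using Submodule.mul_induction_on' generalizing D with
    | mem_mul_mem g hg h hh =>
      obtain ⟨D₁, hD₁, D₂, hD₂, rfl⟩ := Finset.mem_add.mp (support_mul g h hD)
      obtain ⟨T, hT, hTD⟩ := ih hg hD₁
      obtain ⟨j, hj⟩ := exists_le_of_mem_span_monomial hh hD₂
      exact ⟨j ::ₘ T, by simp [hT], by simpa [add_comm] using add_le_add hTD hj⟩
    | add x _ y _ hx hy =>
      obtain h | h := Finset.mem_union.mp (support_add hD)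
      exacts [hx h, hy h]

theorem mem_intCl_of_mem {I : Ideal (MvPolynomial (Fin n) k)} {f : MvPolynomial (Fin n) k}
    (hf : f ∈ I) : f ∈ intCl I :=
  ⟨1, one_pos, fun _ => -f, fun i h1 h2 => by rw [le_antisymm h2 h1, pow_one]; exact neg_mem hf,
    by simp⟩

theorem exists_multiset_sum_le_nsmul_of_monomial_mem_intCl {C : ι → Fin n →₀ ℕ}
    {A : Fin n →₀ ℕ}
    (hA : monomial A (1 : k) ∈ intCl (Ideal.span (Set.range fun j => monomial (C j) (1 : k)))) :
    ∃ i, 0 < i ∧ ∃ T : Multiset ι, Multiset.card T = i ∧ (T.map C).sum ≤ i • A := by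
  obtain ⟨r, -, a, ha, heq⟩ := hA
  have hcoeff : coeff (r • A) (∑ i ∈ Finset.Icc 1 r, a i * monomial A (1 : k) ^ (r - i)) ≠ 0 := by
    have := congrArg (coeff (r • A)) heq
    rw [coeff_add, monomial_pow, one_pow, coeff_monomial, if_pos rfl, coeff_zero] at this
    exact fun h => one_ne_zero (by rwa [h, add_zero] at this)
  rw [coeff_sum] at hcoeff
  obtain ⟨i, hi, hne⟩ := Finset.exists_ne_zero_of_sum_ne_zero hcoeff
  obtain ⟨hi1, hir⟩ := Finset.mem_Icc.mp hi
  have hsplit : r • A = i • A + (r - i) • A := by rw [← add_smul, Nat.add_sub_cancel' hir]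
  rw [monomial_pow, one_pow, hsplit, coeff_mul_monomial, mul_one] at hne
  exact ⟨i, hi1, exists_multiset_sum_le_of_mem_span_monomial_pow i (ha i hi1 hir)
    (mem_support_iff.mpr hne)⟩

theorem mem_minExps_intCl_span_monomial {C : ι → Fin n →₀ ℕ}
    (hC : ∀ i j, (C j).support ⊆ (C i).support → j = i) (i : ι) :
    C i ∈ minExps (intCl (Ideal.span (Set.range fun j => monomial (C j) (1 : k)))) := by
  refine ⟨mem_intCl_of_mem (Ideal.subset_span ⟨i, rfl⟩), fun A hA hAi => ?_⟩
  obtain ⟨p, hp, T, hT, hTA⟩ := exists_multiset_sum_le_nsmul_of_monomial_mem_intCl hA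
  have hTi : ∀ j ∈ T, j = i := fun j hj => hC i j <|
    calc (C j).support
        ⊆ (T.map C).sum.support :=
          Finsupp.support_mono (Multiset.le_sum_of_mem (Multiset.mem_map_of_mem C hj))
      _ ⊆ (p • A).support := Finsupp.support_mono hTA
      _ ⊆ A.support := Finsupp.support_smul
      _ ⊆ (C i).support := Finsupp.support_mono hAi
  rw [Multiset.eq_replicate_of_mem hTi, Multiset.map_replicate, Multiset.sum_replicate, hT] at hTA
  exact le_antisymm hAi <| Finsupp.le_def.mpr fun x =>
    Nat.le_of_mul_le_mul_left (by simpa using Finsupp.le_def.mp hTA x) hp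

theorem minExps_span_monomial_subset {C : ι → Fin n →₀ ℕ} :
    minExps (Ideal.span (Set.range fun j => monomial (C j) (1 : k)) :
      Set (MvPolynomial (Fin n) k)) ⊆ Set.range C := by
  rintro A ⟨hA, hmin⟩
  obtain ⟨j, hj⟩ := exists_le_of_mem_span_monomial hA (D := A) (by simp)
  exact ⟨j, hmin _ (Ideal.subset_span ⟨j, rfl⟩) hj⟩

theorem minExps_finite (T : Set (MvPolynomial (Fin n) k)) : (minExps T).Finite :=
  IsAntichain.finite_of_partiallyWellOrderedOn (fun _ ha _ hb hne hle => hne (hb.2 _ ha.1 hle))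
    (Set.isPWO_of_wellQuasiOrderedLE _)

end MonomialIdeal

theorem image_subset_image_of_support_sum_subset {ι κ σ : Type*} [DecidableEq ι]
    {B : ι → σ →₀ ℕ} (hB0 : ∀ i, B i ≠ 0)
    (hB : Pairwise fun i j => Disjoint (B i).support (B j).support)
    {s t : Finset κ} {f g : κ → ι}
    (h : (∑ a ∈ s, B (f a)).support ⊆ (∑ a ∈ t, B (g a)).support) : s.image f ⊆ t.image g := by
  simp only [Finset.subset_iff, Finset.mem_image, forall_exists_index, and_imp]
  rintro _ a ha rfl
  obtain ⟨y, hy⟩ := Finsupp.support_nonempty_iff.mpr (hB0 (f a))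
  obtain ⟨b, hb, hyb⟩ := Finsupp.mem_support_finsetSum y
    (h (Finsupp.support_mono (Finset.single_le_sum (f := fun a => B (f a)) (fun _ _ => zero_le) ha) hy))
  exact ⟨b, hb, by_contra fun hne => Finset.disjoint_left.mp (hB hne) hyb hy⟩

theorem eq_of_image_add_mod_subset {m k j i : ℕ} (hk : 0 < k) (hkm : k < m) (hj : j < m)
    (hi : i < m) (h : (Finset.Icc 1 k).image (fun l => (j + l) % m) ⊆
      (Finset.Icc 1 k).image (fun l => (i + l) % m)) : j = i := by
  by_contra hji
  have hmod : ∀ a < 2 * m, a % m = a ∧ a < m ∨ a % m = a - m ∧ m ≤ a := fun a ha => by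
    rcases lt_or_ge a m with h | h
    · exact .inl ⟨Nat.mod_eq_of_lt h, h⟩
    · exact .inr ⟨by rw [Nat.mod_eq_sub_mod h, Nat.mod_eq_of_lt (by omega)], h⟩
  -- With `d` the cyclic distance from `i` to `j`, the step `l` takes `j` to `i + k + 1` or to
  -- `i + d + 1`, both outside the arc of `i`.
  set d := (j + m - i) % m
  have hd := hmod (j + m - i) (by omega)
  set l := if d ≤ k then k + 1 - d else 1
  have hlv : l = if d ≤ k then k + 1 - d else 1 := rfl
  have hl : l ∈ Finset.Icc 1 k := by
    rw [Finset.mem_Icc]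
    split_ifs at hlv <;> omega
  obtain ⟨l', hl', heq⟩ := Finset.mem_image.mp (h (Finset.mem_image_of_mem _ hl))
  rw [Finset.mem_Icc] at hl hl'
  have h₁ := hmod (i + l') (by omega)
  have h₂ := hmod (j + l) (by omega)
  split_ifs at hlv <;> omega

theorem eq_of_support_sum_add_mod_subset {σ : Type*} {m k : ℕ} (hm : 0 < m) (hk : 0 < k)
    (hkm : k < m) {B : Fin m → σ →₀ ℕ} (hB0 : ∀ i, B i ≠ 0)
    (hB : Pairwise fun i j => Disjoint (B i).support (B j).support) {i j : Fin m}
    (h : (∑ l ∈ Finset.Icc 1 k, B ⟨((j : ℕ) + l) % m, Nat.mod_lt _ hm⟩).support ⊆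
      (∑ l ∈ Finset.Icc 1 k, B ⟨((i : ℕ) + l) % m, Nat.mod_lt _ hm⟩).support) : j = i := by
  classical
  have hval := Finset.image_subset_image (f := Fin.val)
    (image_subset_image_of_support_sum_subset hB0 hB h)
  simp only [Finset.image_image, Function.comp_def] at hval
  exact Fin.ext (eq_of_image_add_mod_subset hk hkm j.isLt i.isLt hval)

/-- **Kamoi's description; height-3 Gorenstein monomial ideals.**
Let `m` be odd, `s = (m+1)/2`, `x^{B 1}, …, x^{B m}` pairwise coprime (nonconstant)
monomials, and `C i` the exponent of `∏_{l=1}^{s-1} x^{B ν(i+l)}` where `ν` reduces mod `m`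
into `{1,…,m}` (here: indices of `Fin m`, reduction `(i + l) % m`). If
`I = ⟨x^{C 1}, …, x^{C m}⟩`, then each `x^{C i}` is a minimal monomial generator of the
integral closure `Ī`; in particular `μ(I) ≤ μ(Ī)`. -/
theorem gorenstein_minGens_minExps_intCl (m : ℕ) (hm : 0 < m) (hodd : Odd m)
    (s : ℕ) (hs : s = (m + 1) / 2)
    (B : Fin m → (Fin n →₀ ℕ)) (hB0 : ∀ i, B i ≠ 0)
    (hcop : Pairwise fun i j => Disjoint (B i).support (B j).support)
    (C : Fin m → (Fin n →₀ ℕ))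
    (hC : ∀ i : Fin m,
      C i = ∑ l ∈ Finset.Icc 1 (s - 1), B ⟨((i : ℕ) + l) % m, Nat.mod_lt _ hm⟩)
    (I : Ideal (MvPolynomial (Fin n) k))
    (hI : I = Ideal.span (Set.range fun i => monomial (C i) (1 : k))) :
    (∀ i, C i ∈ minExps (intCl I)) ∧
      (minExps (I : Set (MvPolynomial (Fin n) k))).ncard ≤ (minExps (intCl I)).ncard := by
  have hsupp : ∀ i j, (C j).support ⊆ (C i).support → j = i := by
    obtain rfl | hm1 := eq_or_ne m 1
    · exact fun i j _ => Subsingleton.elim j i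
    obtain ⟨t, rfl⟩ := hodd
    intro i j h
    rw [hC i, hC j] at h
    exact eq_of_support_sum_add_mod_subset hm (by omega) (by omega) hB0 hcop h
  have hmin : ∀ i, C i ∈ minExps (intCl I) := hI ▸ mem_minExps_intCl_span_monomial hsupp
  refine ⟨hmin, Set.ncard_le_ncard ?_ (minExps_finite _)⟩
  rintro _ hA
  obtain ⟨j, rfl⟩ := minExps_span_monomial_subset (hI ▸ hA)
  exact hmin j
end

section
/- Let I be a monomial ideal in k[x,y] with minimal monomial generating set G(I). Then the minimal number of generators satisfies μ(I) ≤ μ(Ī), where Ī is the integral closure of I. -/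
open MvPolynomial

variable {k : Type} [Field k] {n : ℕ}

/-!
Under the exponent map, `μ(I)` counts the minimal points of a set `G ⊆ ℕ²` and `μ(Ī)` the minimal
lattice points of the Newton polyhedron `conv G + ℝ≥0²`. For a finite antichain `P ⊆ ℕ²` we
induct on `#P`. Let `a`, `b` be its leftmost and rightmost points. If all of `P` lies on or above
the chord `ab`, the lattice points just above the chord give `min (Δx, Δy) + 1 ≥ #P` minimal points.
Otherwise a point `s ∈ P` strictly below the chord minimises the chord's normal form; the points
of `P` left and right of `s` have Newton polyhedra whose minimal points stay minimal for `P` and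
share only `s`, so `μ` is at least `#P₁ + #P₂ - 1 = #P`.
-/

section NewtonPoints

variable {M M' : Type*} [AddCommMonoid M] [AddCommMonoid M']

def countedSums (s : Set M) : AddSubmonoid (ℕ × M) :=
  AddSubmonoid.closure ((fun p => (1, p)) '' s)

theorem one_mem_countedSums {s : Set M} {p : M} (hp : p ∈ s) : (1, p) ∈ countedSums s :=
  AddSubmonoid.subset_closure ⟨p, hp, rfl⟩

theorem countedSums_mono {s t : Set M} (h : s ⊆ t) : countedSums s ≤ countedSums t :=
  AddSubmonoid.closure_mono (Set.image_mono h)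

theorem countedSums_union (s t : Set M) :
    countedSums (s ∪ t) = countedSums s ⊔ countedSums t := by
  rw [countedSums, Set.image_union, AddSubmonoid.closure_union]
  rfl

theorem map_mem_countedSums (f : M →+ M') {s : Set M} {x : ℕ × M} (hx : x ∈ countedSums s) :
    (x.1, f x.2) ∈ countedSums (f '' s) := by
  induction hx using AddSubmonoid.closure_induction with
  | mem x hx =>
    obtain ⟨p, hp, rfl⟩ := hx
    exact one_mem_countedSums ⟨p, hp, rfl⟩
  | zero =>
    simpa only [Prod.fst_zero, Prod.snd_zero, map_zero, Prod.mk_zero_zero] using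
      (countedSums (f '' s)).zero_mem
  | add x y _ _ hx hy => simpa using add_mem hx hy

theorem le_apply_of_mem_countedSums (f : M →+ ℕ) {s : Set M} {c : ℕ} (h : ∀ p ∈ s, c ≤ f p)
    {x : ℕ × M} (hx : x ∈ countedSums s) : x.1 * c ≤ f x.2 := by
  induction hx using AddSubmonoid.closure_induction with
  | mem x hx =>
    obtain ⟨p, hp, rfl⟩ := hx
    simpa using h p hp
  | zero => simp
  | add x y _ _ hx hy => simpa [add_mul] using add_le_add hx hy

theorem apply_le_of_mem_countedSums (f : M →+ ℕ) {s : Set M} {c : ℕ} (h : ∀ p ∈ s, f p ≤ c)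
    {x : ℕ × M} (hx : x ∈ countedSums s) : f x.2 ≤ x.1 * c := by
  induction hx using AddSubmonoid.closure_induction with
  | mem x hx =>
    obtain ⟨p, hp, rfl⟩ := hx
    simpa using h p hp
  | zero => simp
  | add x y _ _ hx hy => simpa [add_mul] using add_le_add hx hy

variable [PartialOrder M] [PartialOrder M']

/-- For `M = ℕⁿ` these are the lattice points of the Newton polyhedron `conv s + ℝ≥0ⁿ`. -/
def newtonPoints (s : Set M) : Set M :=
  {q | ∃ r X, (r, X) ∈ countedSums s ∧ 0 < r ∧ X ≤ r • q}

def minimalNewtonPoints (s : Set M) : Set M :=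
  {q | Minimal (· ∈ newtonPoints s) q}

theorem newtonPoints_mono {s t : Set M} (h : s ⊆ t) : newtonPoints s ⊆ newtonPoints t :=
  fun _ ⟨r, X, hX, hr, hle⟩ => ⟨r, X, countedSums_mono h hX, hr, hle⟩

theorem mem_newtonPoints_of_le {s : Set M} {p q : M} (hp : p ∈ s) (h : p ≤ q) :
    q ∈ newtonPoints s :=
  ⟨1, p, one_mem_countedSums hp, one_pos, by simpa using h⟩

theorem le_apply_of_mem_newtonPoints (f : M →+ ℕ) (hf : Monotone f) {s : Set M} {c : ℕ}
    (h : ∀ p ∈ s, c ≤ f p) {q : M} (hq : q ∈ newtonPoints s) : c ≤ f q := by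
  obtain ⟨r, X, hX, hr, hle⟩ := hq
  have : r * c ≤ r * f q := by
    simpa [mul_comm] using (le_apply_of_mem_countedSums f h hX).trans (hf hle)
  exact Nat.le_of_mul_le_mul_left this hr

theorem image_newtonPoints_subset (f : M →+ M') (hf : Monotone f) (s : Set M) :
    f '' newtonPoints s ⊆ newtonPoints (f '' s) := by
  rintro _ ⟨q, ⟨r, X, hX, hr, hle⟩, rfl⟩
  exact ⟨r, f X, map_mem_countedSums f hX, hr, by simpa using hf hle⟩

theorem newtonPoints_image (e : M ≃+o M') (s : Set M) :
    newtonPoints (e '' s) = e '' newtonPoints s := by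
  refine subset_antisymm (fun q hq => ?_)
    (image_newtonPoints_subset e.toAddMonoidHom e.toOrderIso.monotone s)
  have := image_newtonPoints_subset e.symm.toAddMonoidHom e.symm.toOrderIso.monotone _
    ⟨q, hq, rfl⟩
  refine ⟨e.symm q, ?_, e.apply_symm_apply q⟩
  simpa [Set.image_image] using this

theorem OrderAddMonoidIso.image_setOf_minimal (e : M ≃+o M') (s : Set M) :
    e '' {x | Minimal (· ∈ s) x} = {x | Minimal (· ∈ e '' s) x} :=
  e.toOrderIso.toOrderEmbedding.image_setOfPred_minimal

theorem minimalNewtonPoints_image (e : M ≃+o M') (s : Set M) :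
    minimalNewtonPoints (e '' s) = e '' minimalNewtonPoints s := by
  rw [minimalNewtonPoints, minimalNewtonPoints, newtonPoints_image, e.image_setOf_minimal]

theorem ncard_minimalNewtonPoints_image (e : M ≃+o M') (s : Set M) :
    (minimalNewtonPoints (e '' s)).ncard = (minimalNewtonPoints s).ncard := by
  rw [minimalNewtonPoints_image, Set.ncard_image_of_injective _ (EquivLike.injective e)]

theorem minimalNewtonPoints_finite [WellQuasiOrderedLE M] (s : Set M) :
    (minimalNewtonPoints s).Finite :=
  WellQuasiOrderedLE.finite_of_isAntichain (setOfPred_minimal_antichain _)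

theorem exists_le_mem_countedSums [IsOrderedAddMonoid M] {s t : Set M}
    (h : ∀ g ∈ t, ∃ p ∈ s, p ≤ g) {x : ℕ × M} (hx : x ∈ countedSums t) :
    ∃ Y ≤ x.2, (x.1, Y) ∈ countedSums s := by
  induction hx using AddSubmonoid.closure_induction with
  | mem x hx =>
    obtain ⟨g, hg, rfl⟩ := hx
    obtain ⟨p, hp, hpg⟩ := h g hg
    exact ⟨p, hpg, one_mem_countedSums hp⟩
  | zero => exact ⟨0, le_rfl, (countedSums s).zero_mem⟩
  | add x y _ _ hx hy =>
    obtain ⟨X, hX, hXs⟩ := hx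
    obtain ⟨Y, hY, hYs⟩ := hy
    exact ⟨X + Y, add_le_add hX hY, add_mem hXs hYs⟩

theorem newtonPoints_subset_of_forall_exists_le [IsOrderedAddMonoid M] {s t : Set M}
    (h : ∀ g ∈ t, ∃ p ∈ s, p ≤ g) : newtonPoints t ⊆ newtonPoints s := by
  rintro q ⟨r, X, hX, hr, hXq⟩
  obtain ⟨Y, hYX, hY⟩ := exists_le_mem_countedSums h hX
  exact ⟨r, Y, hY, hr, hYX.trans hXq⟩

theorem newtonPoints_setOf_minimal [IsOrderedAddMonoid M] [WellFoundedLT M] (s : Set M) :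
    newtonPoints {p | Minimal (· ∈ s) p} = newtonPoints s :=
  (newtonPoints_mono fun _ hp => hp.prop).antisymm <| newtonPoints_subset_of_forall_exists_le
    fun g hg => (exists_minimal_le_of_wellFoundedLT _ g hg).imp fun _ ⟨hpg, hp⟩ => ⟨hp, hpg⟩

end NewtonPoints

section MonomialIdeal

variable {σ R : Type*} [CommSemiring R]

theorem monomial_mem_span_pow_of_mem_countedSums {G : Set (σ →₀ ℕ)} {x : ℕ × (σ →₀ ℕ)}
    (hx : x ∈ countedSums G) :
    monomial x.2 (1 : R) ∈ Ideal.span ((fun A => monomial A (1 : R)) '' G) ^ x.1 := by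
  induction hx using AddSubmonoid.closure_induction with
  | mem x hx =>
    obtain ⟨g, hg, rfl⟩ := hx
    simpa using (Ideal.subset_span ⟨g, hg, rfl⟩ :
      monomial g (1 : R) ∈ Ideal.span ((fun A => monomial A (1 : R)) '' G))
  | zero => simp
  | add x y _ _ hx hy =>
    simpa [pow_add, monomial_mul] using Ideal.mul_mem_mul hx hy

theorem span_monomial_pow_le (G : Set (σ →₀ ℕ)) (r : ℕ) :
    Ideal.span ((fun A => monomial A (1 : R)) '' G) ^ r ≤
      Ideal.span ((fun A => monomial A (1 : R)) '' {X | (r, X) ∈ countedSums G}) := by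
  induction r with
  | zero =>
    rw [pow_zero, Ideal.one_eq_top, top_le_iff, Ideal.eq_top_iff_one, ← C_1, ← monomial_zero']
    exact Ideal.subset_span ⟨0, (countedSums G).zero_mem, rfl⟩
  | succ r ih =>
    rw [pow_succ]
    refine (Ideal.mul_mono_left ih).trans ?_
    rw [Ideal.span_mul_span', Ideal.span_le]
    rintro _ ⟨_, ⟨X, hX, rfl⟩, _, ⟨g, hg, rfl⟩, rfl⟩
    refine Ideal.subset_span ⟨X + g, ?_, by simp [monomial_mul]⟩
    simpa using add_mem hX (one_mem_countedSums hg)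

theorem monomial_mem_span_monomial_iff [Nontrivial R] {G : Set (σ →₀ ℕ)} {A : σ →₀ ℕ} :
    monomial A (1 : R) ∈ Ideal.span ((fun A => monomial A (1 : R)) '' G) ↔ ∃ g ∈ G, g ≤ A := by
  classical
  simp [mem_ideal_span_monomial_image, support_monomial]

end MonomialIdeal

theorem monomial_mem_intCl_span_iff {G : Set (Fin n →₀ ℕ)} {A : Fin n →₀ ℕ} :
    monomial A (1 : k) ∈ intCl (Ideal.span ((fun A => monomial A (1 : k)) '' G)) ↔
      A ∈ newtonPoints G := by
  classical
  constructor
  · -- the coefficient of `x^(r • A)` forces some `a i ∈ I ^ i` to contain `x^(i • A)`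
    rintro ⟨r, -, a, ha, heq⟩
    have hterm : ∀ i ∈ Finset.Icc 1 r,
        coeff (r • A) (a i * monomial A (1 : k) ^ (r - i)) = coeff (i • A) (a i) := by
      intro i hi
      have hr : r • A = i • A + (r - i) • A := by
        rw [← add_smul, Nat.add_sub_cancel' (Finset.mem_Icc.1 hi).2]
      rw [monomial_pow, one_pow, hr, coeff_mul_monomial, mul_one]
    have hsum := congrArg (coeff (r • A)) heq
    rw [coeff_add, coeff_sum, Finset.sum_congr rfl hterm, monomial_pow, one_pow, coeff_monomial,
      if_pos rfl, coeff_zero] at hsum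
    obtain ⟨i, hi, hne⟩ : ∃ i ∈ Finset.Icc 1 r, coeff (i • A) (a i) ≠ 0 := by
      by_contra! h
      simp [Finset.sum_eq_zero h] at hsum
    obtain ⟨hi1, hir⟩ := Finset.mem_Icc.1 hi
    obtain ⟨X, hX, hle⟩ := mem_ideal_span_monomial_image.1
      (span_monomial_pow_le G i (ha i hi1 hir)) _ (mem_support_iff.2 hne)
    exact ⟨i, X, hX, hi1, hle⟩
  · -- `x^A` is a root of `T ^ r - x^(r • A)`, and `x^(r • A) ∈ I ^ r`
    rintro ⟨r, X, hX, hr, hle⟩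
    refine ⟨r, hr, fun i => if i = r then -monomial (r • A) 1 else 0, fun i _ _ => ?_, ?_⟩
    · dsimp only
      split_ifs with h
      · rw [h]
        refine neg_mem ?_
        have hsplit : monomial (r • A) (1 : k) = monomial X 1 * monomial (r • A - X) 1 := by
          rw [monomial_mul, one_mul, add_tsub_cancel_of_le hle]
        rw [hsplit]
        exact Ideal.mul_mem_right _ _ (monomial_mem_span_pow_of_mem_countedSums hX)
      · exact zero_mem _
    · rw [Finset.sum_eq_single_of_mem r (Finset.mem_Icc.2 ⟨hr, le_rfl⟩)
        (fun i _ hi => by simp [hi])]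
      simp [monomial_pow]

theorem minimal_mem_upperClosure_iff {α : Type*} [PartialOrder α] {s : Set α} {x : α} :
    Minimal (· ∈ upperClosure s) x ↔ Minimal (· ∈ s) x := by
  refine ⟨fun h => ?_, fun h => ⟨⟨x, h.prop, le_rfl⟩, fun y ⟨a, ha, hay⟩ hyx => ?_⟩⟩
  · obtain ⟨a, ha, hax⟩ := h.prop
    obtain rfl := h.eq_of_ge ⟨a, ha, le_rfl⟩ hax
    exact ⟨ha, fun y hy hyx => h.le_of_le ⟨y, hy, le_rfl⟩ hyx⟩
  · exact (h.le_of_le ha (hay.trans hyx)).trans hay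

theorem minExps_eq_setOf_minimal (T : Set (MvPolynomial (Fin n) k)) :
    minExps T = {A | Minimal (fun B => monomial B (1 : k) ∈ T) A} := by
  ext A
  refine and_congr_right fun _ => forall₂_congr fun B _ => ?_
  exact ⟨fun h hBA => (h hBA).ge, fun h hBA => le_antisymm hBA (h hBA)⟩

theorem minExps_span_monomial (G : Set (Fin n →₀ ℕ)) :
    minExps (Ideal.span ((fun A => monomial A (1 : k)) '' G) : Set (MvPolynomial (Fin n) k)) =
      {A | Minimal (· ∈ G) A} := by
  simp_rw [minExps_eq_setOf_minimal, SetLike.mem_coe, monomial_mem_span_monomial_iff,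
    ← mem_upperClosure, minimal_mem_upperClosure_iff]

theorem minExps_intCl_span_monomial (G : Set (Fin n →₀ ℕ)) :
    minExps (intCl (Ideal.span ((fun A => monomial A (1 : k)) '' G))) = minimalNewtonPoints G := by
  simp_rw [minExps_eq_setOf_minimal, monomial_mem_intCl_span_iff]
  rfl

section Antichain

variable {α β : Type*} [PartialOrder α] [LinearOrder β] {S : Set (α × β)}

theorem IsAntichain.snd_lt_of_fst_lt (hS : IsAntichain (· ≤ ·) S) {p q : α × β} (hp : p ∈ S)
    (hq : q ∈ S) (h : p.1 < q.1) : q.2 < p.2 := by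
  by_contra! h'
  exact h.ne (congrArg Prod.fst (hS.eq hp hq ⟨h.le, h'⟩))

theorem IsAntichain.snd_le_of_fst_le (hS : IsAntichain (· ≤ ·) S) {p q : α × β} (hp : p ∈ S)
    (hq : q ∈ S) (h : p.1 ≤ q.1) : q.2 ≤ p.2 := by
  by_contra! h'
  exact h'.ne (congrArg Prod.snd (hS.eq hp hq ⟨h, h'.le⟩))

theorem IsAntichain.injOn_fst (hS : IsAntichain (· ≤ ·) S) : S.InjOn Prod.fst := by
  intro p hp q hq h
  rcases le_total p.2 q.2 with h₂ | h₂
  · exact hS.eq hp hq ⟨h.le, h₂⟩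
  · exact (hS.eq hq hp ⟨h.ge, h₂⟩).symm

end Antichain

theorem IsAntichain.injOn_snd {α β : Type*} [LinearOrder α] [PartialOrder β] {S : Set (α × β)}
    (hS : IsAntichain (· ≤ ·) S) : S.InjOn Prod.snd := by
  intro p hp q hq h
  rcases le_total p.1 q.1 with h₁ | h₁
  · exact hS.eq hp hq ⟨h₁, h.le⟩
  · exact (hS.eq hq hp ⟨h₁, h.ge⟩).symm

section Plane

def linearForm (α β : ℕ) : ℕ × ℕ →+ ℕ :=
  α • AddMonoidHom.fst ℕ ℕ + β • AddMonoidHom.snd ℕ ℕ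

@[simp]
theorem linearForm_apply (α β : ℕ) (p : ℕ × ℕ) : linearForm α β p = α * p.1 + β * p.2 := rfl

theorem linearForm_monotone (α β : ℕ) : Monotone (linearForm α β) := fun p q h => by
  simp only [linearForm_apply]
  gcongr
  exacts [h.1, h.2]

def swapIso : ℕ × ℕ ≃+o ℕ × ℕ :=
  { AddEquiv.prodComm with map_le_map_iff' := Prod.swap_le_swap }

@[simp]
theorem swapIso_apply (p : ℕ × ℕ) : swapIso p = p.swap := rfl

variable {S : Set (ℕ × ℕ)} {s : ℕ × ℕ} {α β : ℕ}

theorem le_of_forall_le_of_mem_newtonPoints {c q : ℕ × ℕ} (h : ∀ p ∈ S, c ≤ p)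
    (hq : q ∈ newtonPoints S) : c ≤ q :=
  ⟨le_apply_of_mem_newtonPoints (AddMonoidHom.fst ℕ ℕ) monotone_fst (fun p hp => (h p hp).1) hq,
    le_apply_of_mem_newtonPoints (AddMonoidHom.snd ℕ ℕ) monotone_snd (fun p hp => (h p hp).2) hq⟩

theorem minimalNewtonPoints_singleton (p : ℕ × ℕ) : minimalNewtonPoints {p} = {p} := by
  have hle : ∀ q ∈ newtonPoints {p}, p ≤ q := fun q =>
    le_of_forall_le_of_mem_newtonPoints fun x hx => (Set.mem_singleton_iff.1 hx).ge
  ext q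
  refine ⟨fun hq => hq.eq_of_ge (mem_newtonPoints_of_le rfl le_rfl) (hle q hq.prop), ?_⟩
  rintro rfl
  exact ⟨mem_newtonPoints_of_le rfl le_rfl, fun r hr _ => hle r hr⟩

theorem fst_le_of_mem_minimalNewtonPoints (hs : s ∈ S) {n : ℕ × ℕ}
    (hn : n ∈ minimalNewtonPoints S) (hsn : s.2 ≤ n.2) : n.1 ≤ s.1 := by
  rcases le_total n.1 s.1 with h | h
  · exact h
  · exact (hn.le_of_le (mem_newtonPoints_of_le (q := (s.1, n.2)) hs ⟨le_rfl, hsn⟩) ⟨h, le_rfl⟩).1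

theorem snd_le_of_mem_minimalNewtonPoints (hs : s ∈ S) {n : ℕ × ℕ}
    (hn : n ∈ minimalNewtonPoints S) (hsn : s.1 ≤ n.1) : n.2 ≤ s.2 := by
  rcases le_total n.2 s.2 with h | h
  · exact h
  · exact (hn.le_of_le (mem_newtonPoints_of_le (q := (n.1, s.2)) hs ⟨hsn, le_rfl⟩) ⟨le_rfl, h⟩).2

/- `U / A` and `V / B` are the barycentres of the points of a weighted family above and below `s`,
and `q` dominates the barycentre `(U + V) / (A + B)` of the whole family. The point
`(l U + m s) / (l A + m)` of the segment from `U / A` to `s` has the same abscissa, and lies below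
the segment from `U / A` to `V / B` because `s` minimises `α x + β y`. -/
theorem exists_segment_weights {A B U₁ U₂ V₁ V₂ q₁ q₂ s₁ s₂ : ℕ} (hβ : 0 < β)
    (hAB : 0 < A + B) (hU₁ : U₁ ≤ A * s₁) (hV₁ : B * s₁ ≤ V₁)
    (hU : A * (α * s₁ + β * s₂) ≤ α * U₁ + β * U₂) (hV : B * (α * s₁ + β * s₂) ≤ α * V₁ + β * V₂)
    (hq₁ : U₁ + V₁ ≤ (A + B) * q₁) (hq₂ : U₂ + V₂ ≤ (A + B) * q₂) (hqs : q₁ < s₁) :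
    ∃ l m : ℕ, 0 < l * A + m ∧ l * U₁ + m * s₁ ≤ (l * A + m) * q₁ ∧
      l * U₂ + m * s₂ ≤ (l * A + m) * q₂ := by
  have hX : U₁ + V₁ ≤ (A + B) * s₁ := hq₁.trans (Nat.mul_le_mul_left _ hqs.le)
  have hBA : B * U₁ ≤ A * V₁ := calc
    B * U₁ ≤ B * (A * s₁) := Nat.mul_le_mul_left _ hU₁
    _ = A * (B * s₁) := by ring
    _ ≤ A * V₁ := Nat.mul_le_mul_left _ hV₁
  have hD : U₁ < A * s₁ := by
    by_contra! h
    have : (A + B) * s₁ ≤ (A + B) * q₁ := by linarith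
    exact absurd (Nat.le_of_mul_le_mul_left this hAB) (not_le.2 hqs)
  refine ⟨(A + B) * s₁ - (U₁ + V₁), A * V₁ - B * U₁, ?_, ?_, ?_⟩ <;> zify [hX, hBA] at *
  · nlinarith
  · nlinarith
  · refine sub_nonneg.1 (nonneg_of_mul_nonneg_right ?_ hβ)
    calc (0 : ℤ) ≤ β * (A * s₁ - U₁) * ((A + B) * q₂ - (U₂ + V₂)) +
          (A * s₁ - U₁) * (α * V₁ + β * V₂ - B * (α * s₁ + β * s₂)) +
          (V₁ - B * s₁) * (α * U₁ + β * U₂ - A * (α * s₁ + β * s₂)) := by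
          have hD' : (0 : ℤ) ≤ A * s₁ - U₁ := by linarith
          have hV' : (0 : ℤ) ≤ V₁ - B * s₁ := by linarith
          have := mul_nonneg (mul_nonneg hβ.le hD') (sub_nonneg.2 hq₂)
          have := mul_nonneg hD' (sub_nonneg.2 hV)
          have := mul_nonneg hV' (sub_nonneg.2 hU)
          linarith
      _ = _ := by ring

theorem mem_newtonPoints_sep_snd_le (hS : IsAntichain (· ≤ ·) S) (hs : s ∈ S) (hβ : 0 < β)
    (hL : ∀ p ∈ S, linearForm α β s ≤ linearForm α β p) {q : ℕ × ℕ} (hq : q ∈ newtonPoints S)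
    (hqs : s.2 ≤ q.2) : q ∈ newtonPoints {p ∈ S | s.2 ≤ p.2} := by
  rcases le_or_gt s.1 q.1 with hsq | hqs₁
  · exact mem_newtonPoints_of_le ⟨hs, le_rfl⟩ ⟨hsq, hqs⟩
  obtain ⟨r, X, hX, hr, hXq⟩ := hq
  have hsplit : S = {p ∈ S | s.2 ≤ p.2} ∪ {p ∈ S | p.2 < s.2} := by
    ext p
    by_cases h : s.2 ≤ p.2 <;> simp [h, not_le.1]
  rw [hsplit, countedSums_union, AddSubmonoid.mem_sup] at hX
  obtain ⟨⟨A, U⟩, hU, ⟨B, V⟩, hV, hUV⟩ := hX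
  simp only [Prod.mk_add_mk, Prod.mk.injEq] at hUV
  obtain ⟨rfl, rfl⟩ := hUV
  have hU₁ : U.1 ≤ A * s.1 := apply_le_of_mem_countedSums (AddMonoidHom.fst ℕ ℕ)
    (fun p hp => le_of_not_gt fun h => (hS.snd_lt_of_fst_lt hs hp.1 h).not_ge hp.2) hU
  have hV₁ : B * s.1 ≤ V.1 := le_apply_of_mem_countedSums (AddMonoidHom.fst ℕ ℕ)
    (fun p hp => le_of_not_gt fun h => (hS.snd_lt_of_fst_lt hp.1 hs h).not_gt hp.2) hV
  have hLU := le_apply_of_mem_countedSums _ (fun p hp => hL p hp.1) hU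
  have hLV := le_apply_of_mem_countedSums _ (fun p hp => hL p hp.1) hV
  simp only [linearForm_apply] at hLU hLV
  obtain ⟨l, m, hpos, h₁, h₂⟩ := exists_segment_weights hβ hr hU₁ hV₁ hLU hLV hXq.1 hXq.2 hqs₁
  refine ⟨l * A + m, l • U + m • s, ?_, hpos, Prod.le_def.2 ⟨by simpa using h₁, by simpa using h₂⟩⟩
  simpa using add_mem (AddSubmonoid.nsmul_mem _ hU l)
    (AddSubmonoid.nsmul_mem _ (one_mem_countedSums (s := {p ∈ S | s.2 ≤ p.2}) ⟨hs, le_rfl⟩) m)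

theorem minimalNewtonPoints_sep_snd_le_subset (hS : IsAntichain (· ≤ ·) S) (hs : s ∈ S)
    (hβ : 0 < β) (hL : ∀ p ∈ S, linearForm α β s ≤ linearForm α β p) :
    minimalNewtonPoints {p ∈ S | s.2 ≤ p.2} ⊆ minimalNewtonPoints S := by
  intro n hn
  have hsn : s.2 ≤ n.2 :=
    le_apply_of_mem_newtonPoints (AddMonoidHom.snd ℕ ℕ) monotone_snd (fun p hp => hp.2) hn.prop
  have hns : n.1 ≤ s.1 :=
    fst_le_of_mem_minimalNewtonPoints (S := {p ∈ S | s.2 ≤ p.2}) ⟨hs, le_rfl⟩ hn hsn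
  refine ⟨newtonPoints_mono (Set.sep_subset _ _) hn.prop, fun q hq hqn => ?_⟩
  have hsq : s.2 ≤ q.2 := by
    by_contra! h
    have hLq := le_apply_of_mem_newtonPoints _ (linearForm_monotone α β) hL hq
    simp only [linearForm_apply] at hLq
    have : α * q.1 ≤ α * s.1 := Nat.mul_le_mul_left _ (hqn.1.trans hns)
    have : β * q.2 < β * s.2 := Nat.mul_lt_mul_of_pos_left h hβ
    omega
  exact hn.le_of_le (mem_newtonPoints_sep_snd_le hS hs hβ hL hq hsq) hqn

theorem minimalNewtonPoints_sep_fst_le_subset (hS : IsAntichain (· ≤ ·) S) (hs : s ∈ S)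
    (hα : 0 < α) (hL : ∀ p ∈ S, linearForm α β s ≤ linearForm α β p) :
    minimalNewtonPoints {p ∈ S | s.1 ≤ p.1} ⊆ minimalNewtonPoints S := by
  have key := minimalNewtonPoints_sep_snd_le_subset (S := swapIso '' S) (s := s.swap)
    (hS.image_iso swapIso.toOrderIso) ⟨s, hs, rfl⟩ hα (β := α) (α := β)
    (by rintro _ ⟨p, hp, rfl⟩; simpa [add_comm] using hL p hp)
  have hsep : {p ∈ swapIso '' S | s.swap.2 ≤ p.2} = swapIso '' {p ∈ S | s.1 ≤ p.1} := by
    ext p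
    constructor
    · rintro ⟨⟨p, hp, rfl⟩, h⟩
      exact ⟨p, ⟨hp, h⟩, rfl⟩
    · rintro ⟨p, ⟨hp, h⟩, rfl⟩
      exact ⟨⟨p, hp, rfl⟩, h⟩
  rw [hsep, minimalNewtonPoints_image, minimalNewtonPoints_image] at key
  exact (Set.image_subset_image_iff (EquivLike.injective _)).1 key

/- The point lies just above the chord from `a` to `b`, on which `α x + β y` is minimal; as `β ≤ α`,
lowering either coordinate pushes `α x + β y` below that minimum. -/
theorem mem_minimalNewtonPoints_of_chord {a b : ℕ × ℕ} (ha : a ∈ S) (hb : b ∈ S) (hβ : 0 < β)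
    (hβα : β ≤ α) (hab₁ : a.1 + β = b.1) (hab₂ : b.2 + α = a.2)
    (hL : ∀ p ∈ S, linearForm α β a ≤ linearForm α β p) {j : ℕ} (hj : j ≤ β) :
    (a.1 + j, a.2 - α * j / β) ∈ minimalNewtonPoints S := by
  have hdiv : β * (α * j / β) ≤ α * j := Nat.mul_div_le _ _
  have hdiv' : α * j < β * (α * j / β) + β := by
    have := Nat.div_add_mod (α * j) β
    have := Nat.mod_lt (α * j) hβ
    omega
  have hDa : α * j / β ≤ a.2 := calc
    α * j / β ≤ α := Nat.div_le_of_le_mul ((Nat.mul_le_mul_left α hj).trans_eq (mul_comm α β))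
    _ ≤ a.2 := hab₂ ▸ Nat.le_add_left α b.2
  generalize α * j / β = D at *
  refine ⟨⟨β, (β - j) • a + j • b, ?_, hβ, Prod.le_def.2 ⟨?_, ?_⟩⟩, fun q hq hqp => ?_⟩
  · simpa [Nat.sub_add_cancel hj] using add_mem
      (AddSubmonoid.nsmul_mem _ (one_mem_countedSums ha) (β - j))
      (AddSubmonoid.nsmul_mem _ (one_mem_countedSums hb) j)
  · simp only [Prod.fst_add, Prod.smul_fst, smul_eq_mul, ← hab₁]
    zify [hj]
    nlinarith
  · simp only [Prod.snd_add, Prod.smul_snd, smul_eq_mul]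
    zify [hj, hDa] at hab₂ ⊢
    nlinarith
  · have hLq := le_apply_of_mem_newtonPoints _ (linearForm_monotone α β) hL hq
    have hLpt : α * (a.1 + j) + β * (a.2 - D) < α * a.1 + β * a.2 + β := by
      zify [hDa] at *
      nlinarith
    simp only [linearForm_apply] at hLq
    obtain ⟨hq₁, hq₂⟩ := hqp
    refine Prod.le_def.2 ⟨le_of_not_gt fun h => ?_, le_of_not_gt fun h => ?_⟩
    · have := Nat.mul_le_mul_left α (Nat.succ_le_of_lt h)
      have := Nat.mul_le_mul_left β hq₂
      nlinarith
    · have := Nat.mul_le_mul_left α hq₁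
      have := Nat.mul_le_mul_left β (Nat.succ_le_of_lt h)
      nlinarith

theorem add_one_le_ncard_minimalNewtonPoints {a b : ℕ × ℕ} (ha : a ∈ S) (hb : b ∈ S)
    (hβ : 0 < β) (hβα : β ≤ α) (hab₁ : a.1 + β = b.1) (hab₂ : b.2 + α = a.2)
    (hL : ∀ p ∈ S, linearForm α β a ≤ linearForm α β p) :
    β + 1 ≤ (minimalNewtonPoints S).ncard := by
  set pt : ℕ → ℕ × ℕ := fun j => (a.1 + j, a.2 - α * j / β)
  have hinj : Set.InjOn pt (Finset.range (β + 1)) := fun i _ j _ h => by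
    simpa [pt] using congrArg Prod.fst h
  calc β + 1 = ((Finset.range (β + 1)).image pt).card := by
        rw [Finset.card_image_of_injOn hinj, Finset.card_range]
    _ ≤ _ := by
      rw [← Set.ncard_coe_finset]
      refine Set.ncard_le_ncard ?_ (minimalNewtonPoints_finite S)
      intro p hp
      obtain ⟨j, hj, rfl⟩ := Finset.mem_image.1 hp
      exact mem_minimalNewtonPoints_of_chord ha hb hβ hβα hab₁ hab₂ hL
        (Nat.lt_succ_iff.1 (Finset.mem_range.1 hj))

theorem card_le_ncard_of_chord {P : Finset (ℕ × ℕ)} (hP : IsAntichain (· ≤ ·) (P : Set (ℕ × ℕ)))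
    {a b : ℕ × ℕ} (ha : a ∈ P) (hb : b ∈ P) (hα : 0 < α) (hβ : 0 < β)
    (hab₁ : a.1 + β = b.1) (hab₂ : b.2 + α = a.2) (ha_min : ∀ p ∈ P, a.1 ≤ p.1)
    (hb_max : ∀ p ∈ P, p.1 ≤ b.1) (hL : ∀ p ∈ P, linearForm α β a ≤ linearForm α β p) :
    P.card ≤ (minimalNewtonPoints (P : Set (ℕ × ℕ))).ncard := by
  have hcard₁ : P.card ≤ β + 1 := calc
    P.card = (P.image Prod.fst).card := (Finset.card_image_of_injOn hP.injOn_fst).symm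
    _ ≤ (Finset.Icc a.1 b.1).card := Finset.card_le_card fun x hx => by
      obtain ⟨p, hp, rfl⟩ := Finset.mem_image.1 hx
      exact Finset.mem_Icc.2 ⟨ha_min p hp, hb_max p hp⟩
    _ = β + 1 := by rw [Nat.card_Icc]; omega
  have hcard₂ : P.card ≤ α + 1 := calc
    P.card = (P.image Prod.snd).card := (Finset.card_image_of_injOn hP.injOn_snd).symm
    _ ≤ (Finset.Icc b.2 a.2).card := Finset.card_le_card fun x hx => by
      obtain ⟨p, hp, rfl⟩ := Finset.mem_image.1 hx
      exact Finset.mem_Icc.2 ⟨hP.snd_le_of_fst_le hp hb (hb_max p hp),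
        hP.snd_le_of_fst_le ha hp (ha_min p hp)⟩
    _ = α + 1 := by rw [Nat.card_Icc]; omega
  rcases le_total β α with hβα | hαβ
  · exact hcard₁.trans (add_one_le_ncard_minimalNewtonPoints ha hb hβ hβα hab₁ hab₂ hL)
  · rw [← ncard_minimalNewtonPoints_image swapIso]
    refine hcard₂.trans (add_one_le_ncard_minimalNewtonPoints (S := swapIso '' P) (a := b.swap)
      ⟨b, hb, rfl⟩ ⟨a, ha, rfl⟩ hα hαβ hab₂ hab₁ ?_)
    rintro _ ⟨p, hp, rfl⟩
    have hLp := hL p hp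
    simp only [linearForm_apply, swapIso_apply, Prod.fst_swap, Prod.snd_swap] at hLp ⊢
    have hLab : α * b.1 + β * b.2 = α * a.1 + β * a.2 := by rw [← hab₁, ← hab₂]; ring
    linarith

theorem card_filter_snd_add_card_filter_fst {P : Finset (ℕ × ℕ)}
    (hP : IsAntichain (· ≤ ·) (P : Set (ℕ × ℕ))) (hs : s ∈ P) :
    (P.filter (s.2 ≤ ·.2)).card + (P.filter (s.1 ≤ ·.1)).card = P.card + 1 := by
  have hunion : P.filter (s.2 ≤ ·.2) ∪ P.filter (s.1 ≤ ·.1) = P := by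
    ext p
    simp only [Finset.mem_union, Finset.mem_filter, ← and_or_left, and_iff_left_iff_imp]
    intro hp
    rcases le_or_gt s.1 p.1 with h | h
    · exact Or.inr h
    · exact Or.inl (hP.snd_lt_of_fst_lt hp hs h).le
  have hinter : P.filter (s.2 ≤ ·.2) ∩ P.filter (s.1 ≤ ·.1) = {s} := by
    ext p
    simp only [Finset.mem_inter, Finset.mem_filter, Finset.mem_singleton]
    constructor
    · rintro ⟨⟨hp, h₂⟩, -, h₁⟩
      exact (hP.eq hs hp ⟨h₁, h₂⟩).symm
    · rintro rfl
      exact ⟨⟨hs, le_rfl⟩, hs, le_rfl⟩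
  rw [← Finset.card_union_add_card_inter, hunion, hinter, Finset.card_singleton]

theorem minimalNewtonPoints_sep_inter_subset (hs : s ∈ S) :
    minimalNewtonPoints {p ∈ S | s.2 ≤ p.2} ∩ minimalNewtonPoints {p ∈ S | s.1 ≤ p.1} ⊆ {s} := by
  rintro n ⟨hn₁, hn₂⟩
  have hsn₂ : s.2 ≤ n.2 :=
    le_apply_of_mem_newtonPoints (AddMonoidHom.snd ℕ ℕ) monotone_snd (fun p hp => hp.2) hn₁.prop
  have hsn₁ : s.1 ≤ n.1 :=
    le_apply_of_mem_newtonPoints (AddMonoidHom.fst ℕ ℕ) monotone_fst (fun p hp => hp.2) hn₂.prop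
  exact Prod.ext
    (le_antisymm (fst_le_of_mem_minimalNewtonPoints (S := {p ∈ S | s.2 ≤ p.2})
      ⟨hs, le_rfl⟩ hn₁ hsn₂) hsn₁)
    (le_antisymm (snd_le_of_mem_minimalNewtonPoints (S := {p ∈ S | s.1 ≤ p.1})
      ⟨hs, le_rfl⟩ hn₂ hsn₁) hsn₂)

theorem card_le_ncard_of_split {P : Finset (ℕ × ℕ)} (hP : IsAntichain (· ≤ ·) (P : Set (ℕ × ℕ)))
    (hs : s ∈ P) (hα : 0 < α) (hβ : 0 < β) (hL : ∀ p ∈ P, linearForm α β s ≤ linearForm α β p)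
    (h₁ : (P.filter (s.2 ≤ ·.2)).card ≤
      (minimalNewtonPoints {p ∈ (P : Set (ℕ × ℕ)) | s.2 ≤ p.2}).ncard)
    (h₂ : (P.filter (s.1 ≤ ·.1)).card ≤
      (minimalNewtonPoints {p ∈ (P : Set (ℕ × ℕ)) | s.1 ≤ p.1}).ncard) :
    P.card ≤ (minimalNewtonPoints (P : Set (ℕ × ℕ))).ncard := by
  have hcard := card_filter_snd_add_card_filter_fst hP hs
  have hunion := Set.ncard_union_add_ncard_inter _ _
    (minimalNewtonPoints_finite {p ∈ (P : Set (ℕ × ℕ)) | s.2 ≤ p.2})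
    (minimalNewtonPoints_finite {p ∈ (P : Set (ℕ × ℕ)) | s.1 ≤ p.1})
  have hinter := (Set.ncard_le_ncard (minimalNewtonPoints_sep_inter_subset (S := P) hs)).trans
    (Set.ncard_singleton s).le
  have hsub := Set.ncard_le_ncard (Set.union_subset
    (minimalNewtonPoints_sep_snd_le_subset hP hs hβ hL)
    (minimalNewtonPoints_sep_fst_le_subset hP hs hα hL)) (minimalNewtonPoints_finite _)
  omega

theorem card_le_ncard_minimalNewtonPoints (P : Finset (ℕ × ℕ))
    (hP : IsAntichain (· ≤ ·) (P : Set (ℕ × ℕ))) :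
    P.card ≤ (minimalNewtonPoints (P : Set (ℕ × ℕ))).ncard := by
  induction P using Finset.strongInduction with
  | H P ih =>
  rcases P.eq_empty_or_nonempty with rfl | hne
  · simp
  obtain ⟨a, ha, ha_min⟩ := P.exists_min_image Prod.fst hne
  obtain ⟨b, hb, hb_max⟩ := P.exists_max_image Prod.fst hne
  rcases (ha_min b hb).eq_or_lt with hab | hab₁
  · have hPa : P = {a} := Finset.eq_singleton_iff_unique_mem.2 ⟨ha, fun p hp =>
      hP.injOn_fst hp ha (le_antisymm (hab ▸ hb_max p hp) (ha_min p hp))⟩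
    simp [hPa, minimalNewtonPoints_singleton]
  have hab₂ : b.2 < a.2 := hP.snd_lt_of_fst_lt ha hb hab₁
  -- `linearForm α β` is constant on the chord from `a` to `b`
  set α := a.2 - b.2
  set β := b.1 - a.1
  have hα : 0 < α := Nat.sub_pos_of_lt hab₂
  have hβ : 0 < β := Nat.sub_pos_of_lt hab₁
  obtain ⟨s, hs, hs_min⟩ := P.exists_min_image (linearForm α β) hne
  by_cases hA : linearForm α β a ≤ linearForm α β s
  · exact card_le_ncard_of_chord hP ha hb hα hβ (by omega) (by omega) ha_min hb_max
      fun p hp => hA.trans (hs_min p hp)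
  have hLs : linearForm α β s < linearForm α β a := not_le.1 hA
  have hLab : linearForm α β a = linearForm α β b := by
    simp only [linearForm_apply, α, β]
    zify [hab₁.le, hab₂.le]
    ring
  have has : a.1 < s.1 := (ha_min s hs).lt_of_ne fun h => hLs.ne (by rw [hP.injOn_fst ha hs h])
  have hsb : s.1 < b.1 :=
    (hb_max s hs).lt_of_ne fun h => hLs.ne (by rw [hLab, hP.injOn_fst hs hb h])
  have hb₁ : P.filter (s.2 ≤ ·.2) ⊂ P :=
    Finset.filter_ssubset.2 ⟨b, hb, not_le.2 (hP.snd_lt_of_fst_lt hs hb hsb)⟩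
  have ha₂ : P.filter (s.1 ≤ ·.1) ⊂ P := Finset.filter_ssubset.2 ⟨a, ha, not_le.2 has⟩
  refine card_le_ncard_of_split hP hs hα hβ hs_min ?_ ?_
  · simpa using ih _ hb₁ (hP.subset (Finset.coe_subset.2 hb₁.subset))
  · simpa using ih _ ha₂ (hP.subset (Finset.coe_subset.2 ha₂.subset))

theorem ncard_setOf_minimal_le_ncard_minimalNewtonPoints (G : Set (ℕ × ℕ)) :
    {p | Minimal (· ∈ G) p}.ncard ≤ (minimalNewtonPoints G).ncard := by
  have hfin : {p | Minimal (· ∈ G) p}.Finite :=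
    WellQuasiOrderedLE.finite_of_isAntichain (setOfPred_minimal_antichain _)
  have := card_le_ncard_minimalNewtonPoints hfin.toFinset
    (by simpa using setOfPred_minimal_antichain (· ∈ G))
  rwa [hfin.coe_toFinset, minimalNewtonPoints, newtonPoints_setOf_minimal,
    ← Set.ncard_eq_toFinset_card _ hfin] at this

end Plane

noncomputable def finTwoIso : (Fin 2 →₀ ℕ) ≃+o ℕ × ℕ :=
  { Finsupp.orderIsoFunOnFinite.trans (OrderIso.finTwoArrowIso ℕ) with
    map_add' := fun _ _ => rfl
    map_le_map_iff' := (Finsupp.orderIsoFunOnFinite.trans (OrderIso.finTwoArrowIso ℕ)).le_iff_le }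

/-- For a monomial ideal `I` of `k[x,y]`, the minimal number of monomial
generators satisfies `μ(I) ≤ μ(Ī)`, where `Ī` is the integral closure of `I`. -/
theorem two_variables_mu_le_mu_intCl (I : Ideal (MvPolynomial (Fin 2) k))
    (hI : IsMonomialIdeal I) :
    (minExps (I : Set (MvPolynomial (Fin 2) k))).ncard ≤ (minExps (intCl I)).ncard := by
  obtain ⟨G, rfl⟩ := hI
  rw [minExps_span_monomial, minExps_intCl_span_monomial,
    ← ncard_minimalNewtonPoints_image finTwoIso,
    ← Set.ncard_image_of_injective _ (EquivLike.injective finTwoIso), finTwoIso.image_setOf_minimal]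
  exact ncard_setOf_minimal_le_ncard_minimalNewtonPoints _
end

section
/- For the ideal I = ⟨x^5, y^5, z^5, x^4y^2, x^4yz, x^4z^2, x^3y^3, x^3y^2z, x^3yz^2, x^3z^3, x^2y^4, x^2y^3z, x^2y^2z^2, x^2yz^3, x^4z^4, xy^4z, xy^3z^2, xy^2z^3, xyz^4, y^4z^2, y^3z^3, y^2z^4⟩ in k[x,y,z], the integral closure of I equals ⟨x, y, z⟩^5. -/
open MvPolynomial

variable {k : Type} [Field k] {n : ℕ}

/-!
Write `𝔪 = ⟨x, y, z⟩`. Since every generator of `I` has degree at least `5`, `I ⊆ 𝔪⁵`, and `𝔪⁵`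
is integrally closed: if the lowest homogeneous part of `f` has degree `m < 5`, then in an
equation `f^r + a₁ f^{r-1} + ⋯ + a_r = 0` with `aᵢ ∈ 𝔪^{5i}` every term but `f^r` has order
greater than `r m`, while `f^r` has order exactly `r m` because order is additive on the domain
of power series.

Conversely `x⁵, y⁵, z⁵ ∈ I`, and by pigeonhole a monomial of degree at least `13` is divisible
by one of them, so `f 𝔪¹⁵ ⊆ 𝔪²⁰ ⊆ I 𝔪¹⁵` for `f ∈ 𝔪⁵`. The determinant trick (Cayley–Hamilton
for the faithful finitely generated module `𝔪¹⁵`) turns this into an equation of integral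
dependence of `f` over `I`.
-/

theorem MvPowerSeries.order_pow {σ R : Type*} [CommSemiring R] [NoZeroDivisors R] [Nontrivial R]
    (f : MvPowerSeries σ R) (r : ℕ) : (f ^ r).order = r • f.order := by
  simpa using MvPowerSeries.order_prod (fun _ => f) (Finset.range r)

theorem mem_pow_idealOfVars_iff_le_order {σ R : Type*} [CommSemiring R] (d : ℕ)
    (p : MvPolynomial σ R) :
    p ∈ idealOfVars σ R ^ d ↔ (d : ℕ∞) ≤ (p : MvPowerSeries σ R).order := by
  rw [mem_pow_idealOfVars_iff']
  refine ⟨fun h => MvPowerSeries.nat_le_order fun x hx => by rw [coeff_coe]; exact h x hx,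
    fun h x hx => ?_⟩
  rw [← coeff_coe]
  exact MvPowerSeries.coeff_of_lt_order (lt_of_lt_of_le (by exact_mod_cast hx) h)

theorem degree_add_card_le_of_forall_lt {σ : Type*} [Fintype σ] {A : σ →₀ ℕ} {d : ℕ}
    (h : ∀ i, A i < d) : A.degree + Fintype.card σ ≤ Fintype.card σ * d :=
  calc A.degree + Fintype.card σ = ∑ i, (A i + 1) := by
        simp [Finsupp.degree_eq_sum, Finset.sum_add_distrib]
    _ ≤ ∑ _i : σ, d := Finset.sum_le_sum fun i _ => h i
    _ = Fintype.card σ * d := by simp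

theorem pow_idealOfVars_add_le_mul {σ R : Type*} [Fintype σ] [CommSemiring R]
    {I : Ideal (MvPolynomial σ R)} {d e : ℕ} (hI : ∀ i, X i ^ d ∈ I)
    (he : Fintype.card σ * d < d + e + Fintype.card σ) :
    idealOfVars σ R ^ (d + e) ≤ I * idealOfVars σ R ^ e := by
  rw [pow_idealOfVars_eq_span, Ideal.span_le]
  rintro _ ⟨A, hA : A.degree = d + e, rfl⟩
  obtain ⟨i, hi⟩ : ∃ i, d ≤ A i := by
    by_contra! h
    have := degree_add_card_le_of_forall_lt h
    omega
  obtain ⟨B, rfl⟩ := exists_add_of_le (Finsupp.single_le_iff.mpr hi)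
  have hB : e ≤ B.degree := by
    rw [map_add, Finsupp.degree_single] at hA
    omega
  change monomial _ (1 : R) ∈ I * _
  rw [← one_mul (1 : R), ← monomial_mul, ← X_pow_eq_monomial]
  refine Ideal.mul_mem_mul (hI i) ((mem_pow_idealOfVars_iff _ _).mpr fun x hx => ?_)
  rwa [Finset.mem_singleton.mp (support_monomial_subset hx)]

theorem Ideal.exists_monic_coeff_mem_pow_eval_eq_zero {R : Type*} [CommRing R] [IsDomain R]
    {I N : Ideal R} (hN : N.FG) (hN0 : N ≠ ⊥) {f : R} (hf : ∀ v ∈ N, f * v ∈ I * N) :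
    ∃ p : Polynomial R,
      p.Monic ∧ (∀ j, p.coeff j ∈ I ^ (p.natDegree - j)) ∧ p.eval f = 0 := by
  have : Module.Finite R N := Module.Finite.iff_fg.mpr hN
  obtain ⟨p, hmonic, -, hcoeff, hp⟩ :=
    LinearMap.exists_monic_and_natDegree_eq_and_coeff_mem_pow_and_aeval_eq_zero R
      (algebraMap R (Module.End R N) f) I (by
        rintro _ ⟨v, rfl⟩
        rw [Submodule.mem_smul_top_iff]
        exact hf v v.2)
  refine ⟨p, hmonic, hcoeff, ?_⟩
  obtain ⟨v, hvN, hv0⟩ := Submodule.exists_mem_ne_zero_of_ne_bot hN0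
  rw [Polynomial.aeval_algebraMap_apply_eq_algebraMap_eval] at hp
  have hpv : p.eval f * v = 0 := congrArg Subtype.val (LinearMap.congr_fun hp ⟨v, hvN⟩)
  exact (mul_eq_zero.mp hpv).resolve_right hv0

theorem mem_intCl_of_monic {I : Ideal (MvPolynomial (Fin n) k)} {f : MvPolynomial (Fin n) k}
    {p : Polynomial (MvPolynomial (Fin n) k)} (hmonic : p.Monic)
    (hcoeff : ∀ j, p.coeff j ∈ I ^ (p.natDegree - j)) (hp : p.eval f = 0) : f ∈ intCl I := by
  set r := p.natDegree
  have hr : 0 < r := by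
    refine Nat.pos_of_ne_zero fun h0 => ?_
    rw [hmonic.natDegree_eq_zero.mp h0, Polynomial.eval_one] at hp
    exact one_ne_zero hp
  refine ⟨r, hr, fun i => p.coeff (r - i), fun i _ hir => ?_, ?_⟩
  · simpa [Nat.sub_sub_self hir] using hcoeff (r - i)
  · have hreflect : ∑ i ∈ Finset.Icc 1 r, p.coeff (r - i) * f ^ (r - i)
        = ∑ j ∈ Finset.range r, p.coeff j * f ^ j := by
      rw [← Finset.Ico_add_one_right_eq_Icc, Finset.range_eq_Ico,
        Finset.sum_Ico_reflect (fun j => p.coeff j * f ^ j) 1 le_rfl]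
      simp
    rw [hreflect, ← hp, Polynomial.eval_eq_sum_range, Finset.sum_range_succ,
      hmonic.coeff_natDegree, one_mul, add_comm]

theorem mem_intCl_of_mul_mem {I N : Ideal (MvPolynomial (Fin n) k)} (hN0 : N ≠ ⊥)
    {f : MvPolynomial (Fin n) k} (hf : ∀ v ∈ N, f * v ∈ I * N) : f ∈ intCl I := by
  obtain ⟨p, hmonic, hcoeff, hp⟩ :=
    Ideal.exists_monic_coeff_mem_pow_eval_eq_zero (IsNoetherian.noetherian N) hN0 hf
  exact mem_intCl_of_monic hmonic hcoeff hp

theorem pow_idealOfVars_subset_intCl [NeZero n] {I : Ideal (MvPolynomial (Fin n) k)} {d : ℕ}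
    (hI : ∀ i, X i ^ d ∈ I) : ((idealOfVars (Fin n) k ^ d : Ideal _) : Set _) ⊆ intCl I := by
  intro f hf
  have hN0 : idealOfVars (Fin n) k ^ (n * d) ≠ ⊥ := fun hbot =>
    pow_ne_zero (n * d) (X_ne_zero 0) <| (Ideal.mem_bot).mp <|
      hbot ▸ Ideal.pow_mem_pow (Ideal.subset_span (Set.mem_range_self 0)) (n * d)
  refine mem_intCl_of_mul_mem hN0 fun v hv => ?_
  have hn := NeZero.ne n
  refine pow_idealOfVars_add_le_mul hI (by rw [Fintype.card_fin]; omega) ?_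
  rw [pow_add]
  exact Ideal.mul_mem_mul hf hv

theorem intCl_subset_pow_idealOfVars {I : Ideal (MvPolynomial (Fin n) k)} {d : ℕ}
    (hI : I ≤ idealOfVars (Fin n) k ^ d) :
    intCl I ⊆ ((idealOfVars (Fin n) k ^ d : Ideal _) : Set _) := by
  rintro f ⟨r, hr, a, ha, heq⟩
  by_contra hf
  rw [SetLike.mem_coe, mem_pow_idealOfVars_iff_le_order, not_le] at hf
  obtain ⟨m, hm⟩ := ENat.ne_top_iff_exists.mp hf.ne_top
  have hmd : m < d := by rw [← hm] at hf; exact_mod_cast hf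
  have hfm : f ∈ idealOfVars (Fin n) k ^ m := by rw [mem_pow_idealOfVars_iff_le_order, ← hm]
  have hfr : f ^ r ∈ idealOfVars (Fin n) k ^ (r * m + 1) := by
    rw [eq_neg_of_add_eq_zero_left heq]
    refine neg_mem (Ideal.sum_mem _ fun i hi => ?_)
    obtain ⟨hi1, hir⟩ := Finset.mem_Icc.mp hi
    have hai : a i ∈ idealOfVars (Fin n) k ^ (d * i) := by
      rw [pow_mul]; exact Ideal.pow_right_mono hI i (ha i hi1 hir)
    have hfi : f ^ (r - i) ∈ idealOfVars (Fin n) k ^ (m * (r - i)) := by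
      rw [pow_mul]; exact Ideal.pow_mem_pow hfm (r - i)
    refine Ideal.pow_le_pow_right ?_ (pow_add (idealOfVars (Fin n) k) _ _ ▸
      Ideal.mul_mem_mul hai hfi)
    have hsplit : m * (r - i) + m * i = r * m := by
      rw [← mul_add, Nat.sub_add_cancel hir, mul_comm]
    have hdi : m * i + i ≤ d * i := by nlinarith
    omega
  rw [mem_pow_idealOfVars_iff_le_order, coe_pow, MvPowerSeries.order_pow, ← hm,
    nsmul_eq_mul] at hfr
  norm_cast at hfr
  omega

/-- **Example.** For the ideal
`I = ⟨x⁵, y⁵, z⁵, x⁴y², x⁴yz, x⁴z², x³y³, x³y²z, x³yz², x³z³, x²y⁴, x²y³z, x²y²z², x²yz³,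
x⁴z⁴, xy⁴z, xy³z², xy²z³, xyz⁴, y⁴z², y³z³, y²z⁴⟩` of `k[x,y,z]`, the integral closure of
`I` equals `⟨x,y,z⟩⁵`. (Here `x = X 0`, `y = X 1`, `z = X 2`.) -/
theorem example_intCl_eq_pow_five
    (x y z : MvPolynomial (Fin 3) k) (hx : x = X 0) (hy : y = X 1) (hz : z = X 2)
    (I : Ideal (MvPolynomial (Fin 3) k))
    (hI : I = Ideal.span
      {x^5, y^5, z^5, x^4*y^2, x^4*y*z, x^4*z^2, x^3*y^3, x^3*y^2*z, x^3*y*z^2, x^3*z^3,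
       x^2*y^4, x^2*y^3*z, x^2*y^2*z^2, x^2*y*z^3, x^4*z^4, x*y^4*z, x*y^3*z^2, x*y^2*z^3,
       x*y*z^4, y^4*z^2, y^3*z^3, y^2*z^4}) :
    intCl I = ((Ideal.span {x, y, z} ^ 5 : Ideal (MvPolynomial (Fin 3) k)) :
      Set (MvPolynomial (Fin 3) k)) := by
  subst hx hy hz hI
  have hvars : Ideal.span {X 0, X 1, X 2} = idealOfVars (Fin 3) k := by
    congr 1; ext; simp [Fin.exists_fin_succ, eq_comm]
  rw [hvars]
  refine (intCl_subset_pow_idealOfVars ?_).antisymm (pow_idealOfVars_subset_intCl ?_)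
  · simp only [Ideal.span_le, Set.insert_subset_iff, Set.singleton_subset_iff, SetLike.mem_coe, X,
      monomial_pow, monomial_mul, one_pow, mul_one, map_add, map_nsmul, Finsupp.degree_single,
      monomial_mem_pow_idealOfVars_iff _ _ one_ne_zero]
    norm_num
  · intro i
    fin_cases i <;> exact Ideal.subset_span (by simp)
end
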